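/- Let (h_{k,ℓ})_{0≤ℓ<k} be an infinite non-decreasing triangular array of reals and for each n let Φ_n be the second order branching clustering function on 𝕃₀⁽ⁿ⁾ with parameters (h_{k,ℓ})_{0≤ℓ<k≤n+1} and h = h_{n+1,n}. If ∑_k 2^{−k} h_{k,k−1} < ∞, then the free energy ζ(J) = lim_{n→∞} 2^{−n} ln ∑_{A ⊆ 𝕃₀⁽ⁿ⁾} e^{J|A| − Φ_n(A)} exists and is finite for every J ∈ ℝ. -/

import Mathlib

/-!
Cutting `𝕋⁽ⁿ⁺¹⁾` at the root, a configuration `A` is a pair `B₀, B₁` of configurations on the two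
copies of `𝕋⁽ⁿ⁾`. Every branching point of a half keeps its direct branching ancestor, except the
oldest one, whose ancestor becomes the root (if both halves are nonempty) or stays outside the
tree (if one half is empty). Monotonicity of the array then gives
`Φₙ(B₀) + Φₙ(B₁) ≤ Φₙ₊₁(A) ≤ Φₙ(B₀) + Φₙ(B₁) + 2 (h_{n+2,n+1} - h_{1,0})`, hence
`e^{-2 (h_{n+2,n+1} - h_{1,0})} Zₙ² ≤ Zₙ₊₁ ≤ Zₙ²`. So `ζₙ` is non-increasing with decrements at
most `(h_{n+2,n+1} - h_{1,0}) 2⁻ⁿ`, which are summable, and therefore converges.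
-/

open Filter
open scoped Classical

noncomputable section

namespace PWC

/-- Leaves of the binary tree `𝕋⁽ⁿ⁾` of depth `n`: binary words of length `n`
(coordinate `0` is the first step away from the root). -/
abbrev Leaf (n : ℕ) := Fin n → Bool

/-- The age (distance from the leaves) of the youngest common ancestor `u ∧ v` of two
leaves: `n` minus the length of their longest common prefix. -/
def meetAge {n : ℕ} (u v : Leaf n) : ℕ :=
  if u = v then 0 else n - sInf {i : ℕ | ∃ h : i < n, u ⟨i, h⟩ ≠ v ⟨i, h⟩}

/-- Canonical representative (as a leaf) of the ancestor of `u` at age `k`: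
keep the first `n - k` coordinates and pad by `false`. -/
def trunc {n : ℕ} (k : ℕ) (u : Leaf n) : Leaf n :=
  fun i => if (i : ℕ) < n - k then u i else false

/-- The branching points `ℬ(A) ∩ 𝕃_k` of `A` of age `k`, encoded by the canonical
representatives of the corresponding ancestors. -/
def branchPts {n : ℕ} (A : Finset (Leaf n)) (k : ℕ) : Finset (Leaf n) :=
  ((A ×ˢ A).filter (fun p => meetAge p.1 p.2 = k)).image (fun p => trunc k p.1)

/-- `b_k(A)`: the number of branching points of `A` of age `k`. -/
def bcount {n : ℕ} (A : Finset (Leaf n)) (k : ℕ) : ℕ := (branchPts A k).card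

/-- `b_{k,ℓ}(A)`: the number of branching points of `A` of age `ℓ` whose direct
branching ancestor has age `k`; for `k = n+1` the indicator that the oldest branching
point of `A` has age `ℓ` (i.e. the branching points at age `ℓ` having no strictly older
branching ancestor). -/
def b2count {n : ℕ} (A : Finset (Leaf n)) (k l : ℕ) : ℕ :=
  if k = n + 1 then
    ((branchPts A l).filter (fun w => ∀ j, l < j → j ≤ n → trunc j w ∉ branchPts A j)).card
  else
    ((branchPts A l).filter (fun w => trunc k w ∈ branchPts A k ∧
      ∀ j, l < j → j < k → trunc j w ∉ branchPts A j)).card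

/-- `A ≺ B` : `A` is more clustered than `B`. -/
def MoreClustered {n : ℕ} (A B : Finset (Leaf n)) : Prop :=
  ∃ σ : Leaf n → Leaf n, Set.BijOn σ ↑A ↑B ∧
    ∀ u ∈ A, ∀ v ∈ A, meetAge u v ≤ meetAge (σ u) (σ v)

/-- `A ∼ B` : the subtrees of `𝕋⁽ⁿ⁾` generated by `A` and `B` are graph-isomorphic,
i.e. there is a bijection of the leaf sets preserving all meet ages. -/
def EquivClustered {n : ℕ} (A B : Finset (Leaf n)) : Prop :=
  ∃ σ : Leaf n → Leaf n, Set.BijOn σ ↑A ↑B ∧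
    ∀ u ∈ A, ∀ v ∈ A, meetAge (σ u) (σ v) = meetAge u v

/-- A clustering function: vanishes on `∅` and is invariant under isomorphism of the
generated subtrees. -/
def IsClusteringFn {n : ℕ} (Φ : Finset (Leaf n) → ℝ) : Prop :=
  Φ ∅ = 0 ∧ ∀ A B : Finset (Leaf n), EquivClustered A B → Φ A = Φ B

/-- A monotone clustering function. -/
def IsMonotoneClusteringFn {n : ℕ} (Φ : Finset (Leaf n) → ℝ) : Prop :=
  IsClusteringFn Φ ∧
    (∀ A B : Finset (Leaf n), MoreClustered A B → Φ A ≤ Φ B) ∧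
    (∀ A B : Finset (Leaf n), Disjoint A B → Φ (A ∪ B) ≤ Φ A + Φ B)

/-- The partition function `Z_n^{Φ,J}`. -/
def Z (n : ℕ) (Φ : Finset (Leaf n) → ℝ) (J : ℝ) : ℝ :=
  ∑ A : Finset (Leaf n), Real.exp (J * (A.card : ℝ) - Φ A)

/-- The finite-volume free energy `ζ_n^Φ(J) = 2⁻ⁿ ln Z_n^{Φ,J}`. -/
def zetaN (n : ℕ) (Φ : Finset (Leaf n) → ℝ) (J : ℝ) : ℝ :=
  Real.log (Z n Φ J) / 2 ^ n

/-- The canonical partition function `W_n^Φ(a₀)`. -/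
def W (n : ℕ) (Φ : Finset (Leaf n) → ℝ) (a₀ : ℕ) : ℝ :=
  ∑ A ∈ Finset.univ.filter (fun A : Finset (Leaf n) => A.card = a₀), Real.exp (-Φ A)

/-- The finite-volume canonical free energy `ω_n^Φ(ε) = 2⁻ⁿ ln W_n^Φ(ε 2ⁿ)` (for a
dyadic `ε ∈ [0,1]` and `n` large, `⌊ε 2ⁿ⌋ = ε 2ⁿ`). -/
def omegaN (n : ℕ) (Φ : Finset (Leaf n) → ℝ) (ε : ℝ) : ℝ :=
  Real.log (W n Φ ⌊ε * 2 ^ n⌋₊) / 2 ^ n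

/-- The expected density `ρ_n^Φ(J)` of the dry set under the PWC measure. -/
def rhoN (n : ℕ) (Φ : Finset (Leaf n) → ℝ) (J : ℝ) : ℝ :=
  (∑ A : Finset (Leaf n), (A.card : ℝ) * Real.exp (J * (A.card : ℝ) - Φ A)) /
    (2 ^ n * Z n Φ J)

/-- A dyadic rational. -/
def IsDyadic (x : ℝ) : Prop := ∃ (k : ℤ) (m : ℕ), x = (k : ℝ) / 2 ^ m

/-- The hypotheses of the general theory (Proposition 1.2): each `Φ_n` (for `n ≥ 1`) is
a monotone, non-negative clustering function, and `Φ_n(A) ≤ Φ_{n-1}(A) + γ_n` for any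
`A` contained in the leaf set of one of the two subtrees of `𝕋⁽ⁿ⁾` rooted at a child of
the root (identified with `𝕋⁽ⁿ⁻¹⁾` by prepending the corresponding letter), where
`γ_n ≥ 0` and `∑ γ_n 2⁻ⁿ < ∞`. -/
structure GoodSeq (Φ : ∀ n, Finset (Fin n → Bool) → ℝ) (γ : ℕ → ℝ) : Prop where
  mono : ∀ n, 1 ≤ n → IsMonotoneClusteringFn (Φ n)
  nonneg : ∀ n, 1 ≤ n → ∀ A, 0 ≤ Φ n A
  gamma_nonneg : ∀ n, 0 ≤ γ n
  gamma_summable : Summable fun n => γ n / 2 ^ n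
  subtree : ∀ (n : ℕ) (b : Bool) (A : Finset (Fin n → Bool)),
    Φ (n + 1) (A.image fun u => Fin.cons b u) ≤ Φ n A + γ (n + 1)

/-- The first order branching clustering function with parameters `(h_k)_{k=0}^n`, `h`. -/
def foPhi (n : ℕ) (hs : ℕ → ℝ) (h : ℝ) (A : Finset (Leaf n)) : ℝ :=
  if A = ∅ then 0 else (∑ k ∈ Finset.range (n + 1), hs k * (bcount A k : ℝ)) + h

/-- The second order branching clustering function with parameters
`(h_{k,ℓ})_{0 ≤ ℓ < k ≤ n+1}`, `h`. -/
def soPhi (n : ℕ) (H : ℕ → ℕ → ℝ) (h : ℝ) (A : Finset (Leaf n)) : ℝ :=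
  if A = ∅ then 0
  else (∑ k ∈ Finset.range (n + 2), ∑ l ∈ Finset.range k, H k l * (b2count A k l : ℝ)) + h

/-- A non-decreasing (infinite) triangular array. -/
def ArrayMono (H : ℕ → ℕ → ℝ) : Prop :=
  ∀ k k' l l' : ℕ, l < k → l' < k' → k ≤ k' → l ≤ l' → H k l ≤ H k' l'

/-- The Dirichlet energy on `𝕋⁽ⁿ⁾` of `f` (vertices encoded as words of length `≤ n`,
read from the root; a vertex of length `m` has age `n - m` and its parent edge has
conductance `C (n - m)`). -/
def energy (n : ℕ) (C : ℕ → ℝ) (f : List Bool → ℝ) : ℝ :=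
  ∑ m ∈ Finset.Icc 1 n, ∑ v : Fin m → Bool,
    C (n - m) * (f (List.ofFn v) - f (List.ofFn v).dropLast) ^ 2

/-- The capacity of a set of leaves `A ⊆ 𝕃₀⁽ⁿ⁾`. -/
def cap (n : ℕ) (C : ℕ → ℝ) (A : Finset (Leaf n)) : ℝ :=
  sInf {x : ℝ | ∃ f : List Bool → ℝ, f [] = 1 ∧ (∀ u ∈ A, f (List.ofFn u) = 0) ∧
    x = energy n C f}

open Finset

section Truncation

variable {n : ℕ}

lemma trunc_of_le {k : ℕ} (hk : n ≤ k) (u : Leaf n) : trunc k u = fun _ => false := by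
  funext i
  simp [trunc, Nat.sub_eq_zero_of_le hk]

lemma trunc_trunc {l k : ℕ} (h : l ≤ k) (u : Leaf n) : trunc k (trunc l u) = trunc k u := by
  funext i
  simp only [trunc]
  split_ifs <;> first | rfl | omega

lemma meetAge_le_iff {k : ℕ} {u v : Leaf n} : meetAge u v ≤ k ↔ trunc k u = trunc k v := by
  by_cases huv : u = v
  · simp [meetAge, huv]
  rw [meetAge, if_neg huv]
  set T : Set ℕ := {i : ℕ | ∃ h : i < n, u ⟨i, h⟩ ≠ v ⟨i, h⟩}
  have hT : T.Nonempty := by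
    obtain ⟨i, hi⟩ := Function.ne_iff.mp huv
    exact ⟨i, i.isLt, hi⟩
  constructor
  · intro h
    funext i
    simp only [trunc]
    split_ifs with hik
    · by_contra hne
      have : sInf T ≤ i := Nat.sInf_le ⟨i.isLt, hne⟩
      omega
    · rfl
  · intro h
    have : n - k ≤ sInf T := le_csInf hT fun m ⟨hmn, hne⟩ => by
      by_contra! hlt
      exact hne (by simpa [trunc, hlt] using congrFun h ⟨m, hmn⟩)
    omega

lemma meetAge_le (u v : Leaf n) : meetAge u v ≤ n :=
  meetAge_le_iff.mpr (by rw [trunc_of_le le_rfl, trunc_of_le le_rfl])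

end Truncation

section Subtrees

variable {n : ℕ}

/-- `u` as a leaf of the copy of `𝕋⁽ⁿ⁾` rooted at the child `b` of the root of `𝕋⁽ⁿ⁺¹⁾`. -/
def cons (b : Bool) (u : Leaf n) : Leaf (n + 1) := Fin.cons b u

lemma cons_inj {b b' : Bool} {u v : Leaf n} : cons b u = cons b' v ↔ b = b' ∧ u = v :=
  Fin.cons_inj

lemma cons_head_tail (w : Leaf (n + 1)) : cons (w 0) (Fin.tail w) = w :=
  Fin.cons_self_tail w

lemma trunc_cons {k : ℕ} (hk : k ≤ n) (b : Bool) (u : Leaf n) :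
    trunc k (cons b u) = cons b (trunc k u) := by
  funext i
  refine Fin.cases ?_ (fun j => ?_) i <;> simp [cons, trunc, Nat.succ_sub hk]

lemma meetAge_cons_cons_le_iff {k : ℕ} (hk : k ≤ n) {b b' : Bool} {u v : Leaf n} :
    meetAge (cons b u) (cons b' v) ≤ k ↔ b = b' ∧ meetAge u v ≤ k := by
  rw [meetAge_le_iff, meetAge_le_iff, trunc_cons hk, trunc_cons hk, cons_inj]

lemma meetAge_cons_self (b : Bool) (u v : Leaf n) :
    meetAge (cons b u) (cons b v) = meetAge u v := by
  have h : meetAge (cons b u) (cons b v) ≤ meetAge u v :=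
    (meetAge_cons_cons_le_iff (meetAge_le u v)).mpr ⟨rfl, le_rfl⟩
  exact le_antisymm h ((meetAge_cons_cons_le_iff (h.trans (meetAge_le u v))).mp le_rfl).2

lemma meetAge_cons_of_ne {b b' : Bool} (h : b ≠ b') (u v : Leaf n) :
    meetAge (cons b u) (cons b' v) = n + 1 := by
  have := (meetAge_cons_cons_le_iff le_rfl (u := u) (v := v)).not.mpr (by tauto)
  have := meetAge_le (cons b u) (cons b' v)
  omega

end Subtrees

lemma mem_branchPts {n k : ℕ} {A : Finset (Leaf n)} {x : Leaf n} :
    x ∈ branchPts A k ↔ ∃ u ∈ A, ∃ v ∈ A, meetAge u v = k ∧ trunc k u = x := by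
  simp [branchPts, and_assoc]

section Join

variable {n : ℕ}

/-- The configuration on `𝕋⁽ⁿ⁺¹⁾` whose trace on the subtree of the child `b` of the root
is `B b`. -/
def join (B : Bool → Finset (Leaf n)) : Finset (Leaf (n + 1)) :=
  univ.biUnion fun b => (B b).image (cons b)

variable {B : Bool → Finset (Leaf n)}

lemma mem_join {w : Leaf (n + 1)} : w ∈ join B ↔ ∃ b, ∃ u ∈ B b, cons b u = w := by
  simp only [join, mem_biUnion, mem_univ, true_and, mem_image]

lemma cons_mem_join {b : Bool} {u : Leaf n} : cons b u ∈ join B ↔ u ∈ B b := by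
  refine mem_join.trans ⟨?_, fun hu => ⟨b, u, hu, rfl⟩⟩
  rintro ⟨c, v, hv, h⟩
  obtain ⟨rfl, rfl⟩ := cons_inj.mp h
  exact hv

variable (n) in
def joinEquiv : (Bool → Finset (Leaf n)) ≃ Finset (Leaf (n + 1)) where
  toFun := join
  invFun C b := univ.filter fun u => cons b u ∈ C
  left_inv B := by ext b u; simp [cons_mem_join]
  right_inv C := by ext w; rw [← cons_head_tail w]; simp [cons_mem_join]

lemma card_join : (join B).card = ∑ b, (B b).card := by
  rw [join, card_biUnion]
  · exact sum_congr rfl fun b _ => card_image_of_injective _ fun u v h => (cons_inj.mp h).2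
  · intro b _ b' _ hbb'
    simp only [Function.onFun, disjoint_left, mem_image]
    rintro _ ⟨u, -, rfl⟩ ⟨v, -, h⟩
    exact hbb' (cons_inj.mp h).1.symm

lemma filter_join (P : Leaf (n + 1) → Prop) [DecidablePred P] :
    (join B).filter P = join fun b => (B b).filter fun u => P (cons b u) := by
  ext w
  rw [← cons_head_tail w]
  simp [cons_mem_join]

lemma branchPts_join {k : ℕ} (hk : k ≤ n) :
    branchPts (join B) k = join fun b => branchPts (B b) k := by
  ext w
  rw [← cons_head_tail w, cons_mem_join, mem_branchPts, mem_branchPts]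
  generalize w 0 = b, Fin.tail w = x
  constructor
  · rintro ⟨_, hu', _, hv', hm, ht⟩
    obtain ⟨c, u, hu, rfl⟩ := mem_join.mp hu'
    obtain ⟨c', v, hv, rfl⟩ := mem_join.mp hv'
    obtain ⟨rfl, -⟩ := (meetAge_cons_cons_le_iff hk).mp hm.le
    rw [trunc_cons hk, cons_inj] at ht
    obtain ⟨rfl, rfl⟩ := ht
    exact ⟨u, hu, v, hv, by rwa [meetAge_cons_self] at hm, rfl⟩
  · rintro ⟨u, hu, v, hv, hm, rfl⟩
    exact ⟨cons b u, cons_mem_join.mpr hu, cons b v, cons_mem_join.mpr hv,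
      by rw [meetAge_cons_self, hm], trunc_cons hk b u⟩

lemma trunc_cons_mem_branchPts_join {j : ℕ} (hj : j ≤ n) {b : Bool} {w : Leaf n} :
    trunc j (cons b w) ∈ branchPts (join B) j ↔ trunc j w ∈ branchPts (B b) j := by
  rw [trunc_cons hj, branchPts_join hj, cons_mem_join]

lemma branchPts_join_root_eq_empty {b : Bool} (hb : B b = ∅) :
    branchPts (join B) (n + 1) = ∅ := by
  refine eq_empty_of_forall_notMem fun x hx => ?_
  obtain ⟨_, hu, _, hv, hm, -⟩ := mem_branchPts.mp hx
  obtain ⟨c, u, hu, rfl⟩ := mem_join.mp hu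
  obtain ⟨c', v, hv, rfl⟩ := mem_join.mp hv
  have hcc' : c = c' := by
    cases b <;> cases c <;> cases c' <;> simp_all
  rw [hcc', meetAge_cons_self] at hm
  have := meetAge_le u v
  omega

lemma trunc_mem_branchPts_join_root (hB : ∀ b, (B b).Nonempty) (w : Leaf (n + 1)) :
    trunc (n + 1) w ∈ branchPts (join B) (n + 1) := by
  obtain ⟨u, hu⟩ := hB false
  obtain ⟨v, hv⟩ := hB true
  exact mem_branchPts.mpr ⟨cons false u, cons_mem_join.mpr hu, cons true v, cons_mem_join.mpr hv,
    meetAge_cons_of_ne Bool.false_ne_true u v, by rw [trunc_of_le le_rfl, trunc_of_le le_rfl]⟩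

end Join

section OldestBranchingPoint

variable {n : ℕ} {A : Finset (Leaf n)}

/-- The age of the oldest branching point of `A` (junk value `0` for `A = ∅`). -/
def oldestAge (A : Finset (Leaf n)) : ℕ := (A ×ˢ A).sup fun p => meetAge p.1 p.2

lemma meetAge_le_oldestAge {u v : Leaf n} (hu : u ∈ A) (hv : v ∈ A) :
    meetAge u v ≤ oldestAge A :=
  le_sup (f := fun p : Leaf n × Leaf n => meetAge p.1 p.2)
    (mem_product.mpr ⟨hu, hv⟩ : (u, v) ∈ A ×ˢ A)

lemma oldestAge_le (A : Finset (Leaf n)) : oldestAge A ≤ n :=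
  Finset.sup_le fun p _ => meetAge_le p.1 p.2

lemma exists_meetAge_eq_oldestAge (hA : A.Nonempty) :
    ∃ u ∈ A, ∃ v ∈ A, meetAge u v = oldestAge A := by
  obtain ⟨p, hp, hpA⟩ := exists_mem_eq_sup (A ×ˢ A) (hA.product hA) fun p => meetAge p.1 p.2
  exact ⟨p.1, (mem_product.mp hp).1, p.2, (mem_product.mp hp).2, hpA.symm⟩

lemma branchPts_eq_empty_of_oldestAge_lt {j : ℕ} (hj : oldestAge A < j) : branchPts A j = ∅ :=
  eq_empty_of_forall_notMem fun _ hx => by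
    obtain ⟨u, hu, v, hv, rfl, -⟩ := mem_branchPts.mp hx
    exact absurd (meetAge_le_oldestAge hu hv) (not_le.mpr hj)

lemma branchPts_oldestAge {u : Leaf n} (hu : u ∈ A) :
    branchPts A (oldestAge A) = {trunc (oldestAge A) u} := by
  have htrunc : ∀ w ∈ A, trunc (oldestAge A) w = trunc (oldestAge A) u := fun w hw =>
    meetAge_le_iff.mp (meetAge_le_oldestAge hw hu)
  ext x
  rw [mem_singleton, mem_branchPts]
  constructor
  · rintro ⟨w, hw, -, -, -, rfl⟩
    exact htrunc w hw
  · rintro rfl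
    obtain ⟨w, hw, v, hv, hwv⟩ := exists_meetAge_eq_oldestAge ⟨u, hu⟩
    exact ⟨w, hw, v, hv, hwv, htrunc w hw⟩

/-- The oldest branching point is the only one without a branching ancestor. -/
lemma b2count_oldest (hA : A.Nonempty) (l : ℕ) :
    b2count A (n + 1) l = if l = oldestAge A then 1 else 0 := by
  obtain ⟨u, hu⟩ := hA
  rw [b2count, if_pos rfl]
  split_ifs with hl
  · subst hl
    rw [branchPts_oldestAge hu, filter_singleton, if_pos, card_singleton]
    intro j hj _
    rw [branchPts_eq_empty_of_oldestAge_lt hj]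
    exact notMem_empty _
  · refine card_eq_zero.mpr (filter_eq_empty_iff.mpr fun w hw hnone => ?_)
    obtain ⟨v, hv, v', hv', rfl, rfl⟩ := mem_branchPts.mp hw
    have hlt : meetAge v v' < oldestAge A := lt_of_le_of_ne (meetAge_le_oldestAge hv hv') hl
    refine hnone _ hlt (oldestAge_le A) ?_
    rw [trunc_trunc hlt.le, branchPts_oldestAge hu, mem_singleton]
    exact meetAge_le_iff.mp (meetAge_le_oldestAge hv hu)

lemma sum_mul_b2count_oldest (hA : A.Nonempty) (c : ℕ → ℝ) :
    ∑ l ∈ range (n + 1), c l * b2count A (n + 1) l = c (oldestAge A) := by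
  rw [sum_eq_single_of_mem _ (mem_range.mpr (Nat.lt_succ_of_le (oldestAge_le A)))]
  · simp [b2count_oldest hA]
  · intro l _ hl
    simp [b2count_oldest hA, hl]

variable {B : Bool → Finset (Leaf n)}

lemma oldestAge_le_oldestAge_join (b : Bool) : oldestAge (B b) ≤ oldestAge (join B) :=
  Finset.sup_le fun p hp => by
    obtain ⟨hu, hv⟩ := mem_product.mp hp
    rw [← meetAge_cons_self b]
    exact meetAge_le_oldestAge (cons_mem_join.mpr hu) (cons_mem_join.mpr hv)

lemma oldestAge_join (hB : ∀ b, (B b).Nonempty) : oldestAge (join B) = n + 1 := by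
  obtain ⟨u, hu⟩ := hB false
  obtain ⟨v, hv⟩ := hB true
  refine le_antisymm (oldestAge_le _) ?_
  calc n + 1 = meetAge (cons false u) (cons true v) :=
        (meetAge_cons_of_ne Bool.false_ne_true u v).symm
    _ ≤ oldestAge (join B) := meetAge_le_oldestAge (cons_mem_join.mpr hu) (cons_mem_join.mpr hv)

end OldestBranchingPoint

section JoinCounts

variable {n : ℕ} {B : Bool → Finset (Leaf n)}

lemma b2count_join {k l : ℕ} (hk : k ≤ n) (hl : l < k) :
    b2count (join B) k l = ∑ b, b2count (B b) k l := by
  simp only [b2count, if_neg (show k ≠ n + 1 + 1 by omega), if_neg (show k ≠ n + 1 by omega),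
    branchPts_join (show l ≤ n by omega), filter_join, card_join]
  refine sum_congr rfl fun b _ => congrArg card (filter_congr fun u _ => ?_)
  rw [trunc_cons_mem_branchPts_join hk]
  refine and_congr_right' (forall_congr' fun j => forall_congr' fun _ => ?_)
  exact imp_congr_right fun hj => by rw [trunc_cons_mem_branchPts_join (by omega)]

lemma b2count_join_root (hB : ∀ b, (B b).Nonempty) {l : ℕ} (hl : l ≤ n) :
    b2count (join B) (n + 1) l = ∑ b, b2count (B b) (n + 1) l := by
  simp only [b2count, if_neg (show n + 1 ≠ n + 1 + 1 by omega), branchPts_join hl, filter_join,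
    card_join, trunc_mem_branchPts_join_root hB, true_and]
  refine sum_congr rfl fun b _ => congrArg card (filter_congr fun u _ => ?_)
  refine forall_congr' fun j => forall_congr' fun _ => ?_
  rw [Nat.lt_succ_iff]
  exact imp_congr_right fun hj => by rw [trunc_cons_mem_branchPts_join hj]

lemma b2count_join_root_of_eq_empty {b : Bool} (hb : B b = ∅) (l : ℕ) :
    b2count (join B) (n + 1) l = 0 := by
  simp [b2count, branchPts_join_root_eq_empty hb]

end JoinCounts

section SecondOrderPhi

variable {n : ℕ} (H : ℕ → ℕ → ℝ)

/-- The contribution to `soPhi n H h A` of the branching points having a direct branching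
ancestor inside the tree (`k ≤ n`). -/
def soInner (n : ℕ) (A : Finset (Leaf n)) : ℝ :=
  ∑ k ∈ range (n + 1), ∑ l ∈ range k, H k l * b2count A k l

lemma soInner_empty : soInner H n ∅ = 0 := by
  simp [soInner, b2count, branchPts]

lemma soPhi_empty (h : ℝ) : soPhi n H h ∅ = 0 := if_pos rfl

lemma soPhi_of_nonempty (h : ℝ) {A : Finset (Leaf n)} (hA : A.Nonempty) :
    soPhi n H h A = soInner H n A + H (n + 1) (oldestAge A) + h := by
  rw [soPhi, if_neg hA.ne_empty, sum_range_succ, sum_mul_b2count_oldest hA, soInner]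

variable {B : Bool → Finset (Leaf n)}

lemma soInner_join : soInner H (n + 1) (join B) =
    ∑ b, soInner H n (B b) + ∑ l ∈ range (n + 1), H (n + 1) l * b2count (join B) (n + 1) l := by
  rw [soInner, sum_range_succ]
  congr 1
  calc ∑ k ∈ range (n + 1), ∑ l ∈ range k, H k l * (b2count (join B) k l : ℝ)
      = ∑ k ∈ range (n + 1), ∑ l ∈ range k, ∑ b, H k l * b2count (B b) k l :=
        sum_congr rfl fun k hk => sum_congr rfl fun l hl => by
          rw [b2count_join (Nat.lt_succ_iff.mp (mem_range.mp hk)) (mem_range.mp hl),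
            Nat.cast_sum, mul_sum]
    _ = ∑ b, soInner H n (B b) := by
        simp only [soInner]
        rw [sum_comm]
        exact sum_congr rfl fun k _ => sum_comm

lemma soPhi_join_of_forall_nonempty (hB : ∀ b, (B b).Nonempty) :
    soPhi (n + 1) H (H (n + 2) (n + 1)) (join B) =
      ∑ b, soPhi n H (H (n + 1) n) (B b) + 2 * (H (n + 2) (n + 1) - H (n + 1) n) := by
  obtain ⟨u, hu⟩ := hB false
  have hroot : ∑ l ∈ range (n + 1), H (n + 1) l * b2count (join B) (n + 1) l =
      ∑ b, H (n + 1) (oldestAge (B b)) := by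
    simp only [← sum_mul_b2count_oldest (hB _), ← sum_comm (s := range (n + 1))]
    exact sum_congr rfl fun l hl => by
      rw [b2count_join_root hB (Nat.lt_succ_iff.mp (mem_range.mp hl)), Nat.cast_sum, mul_sum]
  rw [soPhi_of_nonempty H _ ⟨cons false u, cons_mem_join.mpr hu⟩, soInner_join, hroot,
    oldestAge_join hB]
  simp only [soPhi_of_nonempty H _ (hB _), Fintype.sum_bool]
  ring

lemma sum_bool_of_eq_empty {f : Finset (Leaf n) → ℝ} (hf : f ∅ = 0) {b : Bool} (hb : B b = ∅) :
    ∑ b', f (B b') = f (B !b) := by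
  cases b <;> simp [hb, hf]

lemma soPhi_join_of_eq_empty {b : Bool} (hb : B b = ∅) (hb' : (B !b).Nonempty) :
    soPhi (n + 1) H (H (n + 2) (n + 1)) (join B) =
      soInner H n (B !b) + H (n + 2) (oldestAge (join B)) + H (n + 2) (n + 1) := by
  obtain ⟨u, hu⟩ := hb'
  rw [soPhi_of_nonempty H _ ⟨cons (!b) u, cons_mem_join.mpr hu⟩, soInner_join,
    sum_bool_of_eq_empty (soInner_empty H) hb]
  simp [b2count_join_root_of_eq_empty hb]

lemma soPhi_join_bounds (hmono : ArrayMono H) (B : Bool → Finset (Leaf n)) :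
    ∑ b, soPhi n H (H (n + 1) n) (B b) ≤ soPhi (n + 1) H (H (n + 2) (n + 1)) (join B) ∧
      soPhi (n + 1) H (H (n + 2) (n + 1)) (join B) ≤
        ∑ b, soPhi n H (H (n + 1) n) (B b) + 2 * (H (n + 2) (n + 1) - H 1 0) := by
  have h₁ : H (n + 1) n ≤ H (n + 2) (n + 1) :=
    hmono _ _ _ _ (by omega) (by omega) (by omega) (by omega)
  have h₂ : H 1 0 ≤ H (n + 1) n := hmono _ _ _ _ (by omega) (by omega) (by omega) (by omega)
  by_cases hB : ∀ b, (B b).Nonempty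
  · rw [soPhi_join_of_forall_nonempty H hB]
    constructor <;> linarith
  simp only [not_forall, not_nonempty_iff_eq_empty] at hB
  obtain ⟨b, hb⟩ := hB
  rw [sum_bool_of_eq_empty (soPhi_empty H _) hb]
  rcases (B !b).eq_empty_or_nonempty with hb' | hb'
  · have hJ : join B = ∅ := eq_empty_of_forall_notMem fun w hw => by
      obtain ⟨c, u, hu, -⟩ := mem_join.mp hw
      cases b <;> cases c <;> simp_all
    rw [hJ, hb', soPhi_empty, soPhi_empty]
    constructor <;> linarith
  rw [soPhi_join_of_eq_empty H hb hb', soPhi_of_nonempty H _ hb']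
  have hle := oldestAge_le_oldestAge_join (B := B) (!b)
  have hJle := oldestAge_le (join B)
  have hble := oldestAge_le (B !b)
  have h₃ : H (n + 1) (oldestAge (B !b)) ≤ H (n + 2) (oldestAge (join B)) :=
    hmono _ _ _ _ (by omega) (by omega) (by omega) hle
  have h₄ : H (n + 2) (oldestAge (join B)) ≤ H (n + 2) (n + 1) :=
    hmono _ _ _ _ (by omega) (by omega) le_rfl hJle
  have h₅ : H 1 0 ≤ H (n + 1) (oldestAge (B !b)) :=
    hmono _ _ _ _ (by omega) (by omega) (by omega) (Nat.zero_le _)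
  constructor <;> linarith

end SecondOrderPhi

section FreeEnergy

variable {n : ℕ} (Φ : Finset (Leaf n) → ℝ) (Φ' : Finset (Leaf (n + 1)) → ℝ) (J : ℝ)

lemma Z_pos : 0 < Z n Φ J :=
  sum_pos (fun _ _ => Real.exp_pos _) univ_nonempty

lemma Z_succ_eq_sum_join : Z (n + 1) Φ' J =
    ∑ B : Bool → Finset (Leaf n), Real.exp (J * ∑ b, ((B b).card : ℝ) - Φ' (join B)) := by
  rw [Z, ← (joinEquiv n).sum_comp]
  simp [joinEquiv, card_join]

lemma Z_sq_eq_sum : Z n Φ J ^ 2 =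
    ∑ B : Bool → Finset (Leaf n), Real.exp (J * ∑ b, ((B b).card : ℝ) - ∑ b, Φ (B b)) := by
  rw [sq, ← Fintype.prod_bool fun _ => Z n Φ J, Z, Fintype.prod_sum]
  refine sum_congr rfl fun B _ => ?_
  rw [← Real.exp_sum, mul_sum, ← sum_sub_distrib]

lemma Z_succ_le_sq (h : ∀ B, ∑ b, Φ (B b) ≤ Φ' (join B)) : Z (n + 1) Φ' J ≤ Z n Φ J ^ 2 := by
  rw [Z_succ_eq_sum_join, Z_sq_eq_sum]
  exact sum_le_sum fun B _ => Real.exp_le_exp.mpr (by linarith [h B])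

lemma exp_neg_mul_sq_le_Z_succ {c : ℝ} (h : ∀ B, Φ' (join B) ≤ ∑ b, Φ (B b) + c) :
    Real.exp (-c) * Z n Φ J ^ 2 ≤ Z (n + 1) Φ' J := by
  rw [Z_succ_eq_sum_join, Z_sq_eq_sum, mul_sum]
  refine sum_le_sum fun B _ => ?_
  rw [← Real.exp_add]
  exact Real.exp_le_exp.mpr (by linarith [h B])

lemma zetaN_eq_log_sq_div : zetaN n Φ J = Real.log (Z n Φ J ^ 2) / 2 ^ (n + 1) := by
  rw [zetaN, Real.log_pow, pow_succ]
  field_simp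
  ring

lemma zetaN_succ_le (h : ∀ B, ∑ b, Φ (B b) ≤ Φ' (join B)) :
    zetaN (n + 1) Φ' J ≤ zetaN n Φ J := by
  rw [zetaN_eq_log_sq_div Φ, zetaN]
  gcongr
  exacts [Z_pos Φ' J, Z_succ_le_sq Φ Φ' J h]

lemma zetaN_sub_le_zetaN_succ {c : ℝ} (h : ∀ B, Φ' (join B) ≤ ∑ b, Φ (B b) + c) :
    zetaN n Φ J - c / 2 ^ (n + 1) ≤ zetaN (n + 1) Φ' J := by
  have hlog := Real.log_le_log (by positivity [Z_pos Φ J]) (exp_neg_mul_sq_le_Z_succ Φ Φ' J h)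
  rw [Real.log_mul (Real.exp_pos _).ne' (pow_pos (Z_pos Φ J) 2).ne', Real.log_exp] at hlog
  rw [zetaN_eq_log_sq_div Φ, zetaN, ← sub_div]
  gcongr
  linarith

end FreeEnergy

theorem exists_tendsto_of_antitone_of_summable_sub_succ {g d : ℕ → ℝ} (hg : Antitone g)
    (hd : Summable d) (hgd : ∀ n, g n - g (n + 1) ≤ d n) : ∃ a, Tendsto g atTop (nhds a) := by
  have he : Summable fun n => g n - g (n + 1) :=
    hd.of_nonneg_of_le (fun n => sub_nonneg.mpr (hg n.le_succ)) hgd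
  refine ⟨g 0 - ∑' n, (g n - g (n + 1)), ?_⟩
  have hlim := he.hasSum.tendsto_sum_nat.const_sub (g 0)
  simp only [sum_range_sub', sub_sub_cancel] at hlim
  exact hlim

lemma summable_sub_div_two_pow {H : ℕ → ℕ → ℝ}
    (hsum : Summable fun k : ℕ => H (k + 1) k / 2 ^ (k + 1)) :
    Summable fun n : ℕ => 2 * (H (n + 2) (n + 1) - H 1 0) / 2 ^ (n + 1) := by
  have h₁ := ((summable_nat_add_iff 1).mpr hsum).mul_left 4
  have h₂ := summable_geometric_two.mul_left (H 1 0)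
  refine (h₁.sub h₂).congr fun n => ?_
  rw [one_div, inv_pow, pow_succ, pow_succ]
  field_simp
  ring

/-- Proposition 1.18: for a non-decreasing triangular array
`(h_{k,ℓ})_{0≤ℓ<k}` with `∑_k 2⁻ᵏ h_{k,k-1} < ∞` and the second order branching
clustering functions `Φ_n` (with `h = h_{n+1,n}`), the free energy
`ζ(J) = lim_n 2⁻ⁿ ln Z_n^{Φ_n,J}` exists and is finite for every `J ∈ ℝ`. -/
theorem stmt12 (H : ℕ → ℕ → ℝ) (hmono : ArrayMono H)
    (hsum : Summable fun k : ℕ => H (k + 1) k / 2 ^ (k + 1)) :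
    ∃ ζ : ℝ → ℝ, ∀ J : ℝ,
      Tendsto (fun n => zetaN n (soPhi n H (H (n + 1) n)) J) atTop (nhds (ζ J)) := by
  have hlim : ∀ J, ∃ a, Tendsto (fun n => zetaN n (soPhi n H (H (n + 1) n)) J) atTop (nhds a) :=
    fun J => exists_tendsto_of_antitone_of_summable_sub_succ
      (antitone_nat_of_succ_le fun n =>
        zetaN_succ_le _ _ J fun B => (soPhi_join_bounds H hmono B).1)
      (summable_sub_div_two_pow hsum)
      fun n => by
        linarith [zetaN_sub_le_zetaN_succ (n := n) _ _ J fun B => (soPhi_join_bounds H hmono B).2]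
  choose ζ hζ using hlim
  exact ⟨ζ, hζ⟩

end PWC
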